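/- arXiv:2307.01483 — 2 statements merged into one kernel-verified Lean document; each statement's English description precedes it below -/
import Mathlib

section
/- Let S > 0, A, B > 0, θ ≥ 1, and m > 1 (here m plays the role of 2*_μ, so m > θ is not assumed). For ν > 0 define Θ_ν = {σ > 0 : Aσ² ≤ S^{-m} σ^{2m} + Bνσ^{2θ}}. Then for every ε > 0 there exists ν̃ > 0, depending only on ε, A, B, θ, S, m, such that for all 0 < ν < ν̃, every σ ∈ Θ_ν satisfies σ ≥ (1-ε) S^{m/(2(m-1))} A^{1/(2(m-1))}. -/
/-- lower bound for elements of Θ_ν uniformly for small ν. -/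
theorem stmt5 (S A B θ m : ℝ) (hS : 0 < S) (hA : 0 < A) (hB : 0 < B)
    (hθ : 1 ≤ θ) (hm : 1 < m) :
    ∀ ε : ℝ, 0 < ε → ∃ ν' : ℝ, 0 < ν' ∧ ∀ ν : ℝ, 0 < ν → ν < ν' →
      ∀ σ : ℝ, 0 < σ → A * σ ^ 2 ≤ S ^ (-m) * σ ^ (2 * m) + B * ν * σ ^ (2 * θ) →
        (1 - ε) * S ^ (m / (2 * (m - 1))) * A ^ (1 / (2 * (m - 1))) ≤ σ := by
  intro ε hε
  rcases le_or_gt 1 ε with hε1 | hε1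
  · refine ⟨1, one_pos, fun ν hν hν' σ hσ hineq => ?_⟩
    have h1 : 0 < S ^ (m / (2 * (m - 1))) := Real.rpow_pos_of_pos hS _
    have h2 : 0 < A ^ (1 / (2 * (m - 1))) := Real.rpow_pos_of_pos hA _
    nlinarith [mul_pos h1 h2]
  · set p := 2 * (m - 1) with hp
    set q := 2 * (θ - 1) with hq
    have hppos : 0 < p := by rw [hp]; linarith
    have hqnn : 0 ≤ q := by rw [hq]; linarith
    set σs := S ^ (m / p) * A ^ (1 / p) with hσsdef
    have hσspos : 0 < σs := mul_pos (Real.rpow_pos_of_pos hS _) (Real.rpow_pos_of_pos hA _)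
    have hσsp : σs ^ p = S ^ m * A := by
      rw [hσsdef, Real.mul_rpow (Real.rpow_pos_of_pos hS _).le (Real.rpow_pos_of_pos hA _).le,
        ← Real.rpow_mul hS.le, ← Real.rpow_mul hA.le,
        div_mul_cancel₀ _ hppos.ne', one_div, inv_mul_cancel₀ hppos.ne', Real.rpow_one]
    have hc : 0 < 1 - ε := by linarith
    have hcp : (1 - ε) ^ p < 1 := Real.rpow_lt_one hc.le (by linarith) hppos
    have hcppos : 0 < (1 - ε) ^ p := Real.rpow_pos_of_pos hc p
    have hσsq_pos : 0 < σs ^ q := Real.rpow_pos_of_pos hσspos q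
    refine ⟨(1 - (1 - ε) ^ p) * A / (B * σs ^ q), div_pos (mul_pos (by linarith) hA) (mul_pos hB hσsq_pos), ?_⟩
    intro ν hν hνlt σ hσ hineq
    by_contra hcon
    push_neg at hcon
    have hσlt : σ < (1 - ε) * σs := by rw [hσsdef, ← mul_assoc]; exact hcon
    have hσle : σ ≤ σs := by nlinarith
    -- divide the defining inequality by σ²
    have e1 : σ ^ (2 * m) = σ ^ p * σ ^ 2 := by
      have h : (2 : ℝ) * m = p + (2 : ℕ) := by rw [hp]; push_cast; ring
      rw [h, Real.rpow_add hσ, Real.rpow_natCast]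
    have e2 : σ ^ (2 * θ) = σ ^ q * σ ^ 2 := by
      have h : (2 : ℝ) * θ = q + (2 : ℕ) := by rw [hq]; push_cast; ring
      rw [h, Real.rpow_add hσ, Real.rpow_natCast]
    have h2pos : (0 : ℝ) < σ ^ 2 := by positivity
    have h6 : A ≤ S ^ (-m) * σ ^ p + B * ν * σ ^ q := by
      refine le_of_mul_le_mul_right ?_ h2pos
      rw [e1, e2] at hineq
      calc A * σ ^ 2 ≤ S ^ (-m) * (σ ^ p * σ ^ 2) + B * ν * (σ ^ q * σ ^ 2) := hineq
        _ = (S ^ (-m) * σ ^ p + B * ν * σ ^ q) * σ ^ 2 := by ring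
    -- bound the first term
    have h2 : σ ^ p < (1 - ε) ^ p * (S ^ m * A) := by
      have := Real.rpow_lt_rpow hσ.le hσlt hppos
      rwa [Real.mul_rpow hc.le hσspos.le, hσsp] at this
    have hSS : S ^ (-m) * S ^ m = 1 := by
      rw [← Real.rpow_add hS]; norm_num
    have hSmpos : 0 < S ^ (-m) := Real.rpow_pos_of_pos hS _
    have h3 : S ^ (-m) * σ ^ p < (1 - ε) ^ p * A := by
      have := mul_lt_mul_of_pos_left h2 hSmpos
      calc S ^ (-m) * σ ^ p < S ^ (-m) * ((1 - ε) ^ p * (S ^ m * A)) := this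
        _ = (S ^ (-m) * S ^ m) * ((1 - ε) ^ p * A) := by ring
        _ = (1 - ε) ^ p * A := by rw [hSS, one_mul]
    -- bound the second term
    have h4 : σ ^ q ≤ σs ^ q := Real.rpow_le_rpow hσ.le hσle hqnn
    have h5 : B * ν * σ ^ q < (1 - (1 - ε) ^ p) * A := by
      have hb1 : B * ν * σ ^ q ≤ B * ν * σs ^ q := by
        have := mul_pos hB hν
        nlinarith [mul_pos hB hν, h4]
      have hb2 : B * ν * σs ^ q < B * ((1 - (1 - ε) ^ p) * A / (B * σs ^ q)) * σs ^ q := by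
        gcongr
      have hb3 : B * ((1 - (1 - ε) ^ p) * A / (B * σs ^ q)) * σs ^ q
          = (1 - (1 - ε) ^ p) * A := by
        field_simp
      linarith
    linarith
end

section
/- Derivative of the value function: let γ > 2, m > γ, and A, B, C > 0. For μ > 0 near ν > 0, define s(μ) > 0 as the unique positive solution of μγ s^{γ-2}B + s^{m-2}C = A (existence/uniqueness holds when s ↦ left side is strictly increasing and the value A is attained), and set a(μ) := (1/2 - 1/γ)s(μ)²A + (1/γ - 1/m)s(μ)^m C, assuming s(ν) = 1 and A = νγB + C. Then a is differentiable at ν and a'(ν) = -B. -/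
open Filter Topology

/-- derivative of the value function along the implicitly defined
fiber maximizer: a'(ν) = -B. -/
theorem stmt17 (A B C γ m ν δ : ℝ) (hA : 0 < A) (hB : 0 < B) (hC : 0 < C)
    (hγ : 2 < γ) (hm : γ < m) (hν : 0 < ν) (hδ : 0 < δ)
    (hcompat : A = ν * γ * B + C)
    (s : ℝ → ℝ) (hsν : s ν = 1)
    (hsol : ∀ x ∈ Set.Ioo (ν - δ) (ν + δ),
      0 < s x ∧ x * γ * s x ^ (γ - 2) * B + s x ^ (m - 2) * C = A)
    (huniq : ∀ x ∈ Set.Ioo (ν - δ) (ν + δ), ∀ t : ℝ, 0 < t →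
      x * γ * t ^ (γ - 2) * B + t ^ (m - 2) * C = A → t = s x)
    (a : ℝ → ℝ)
    (ha : ∀ x, a x = (1 / 2 - 1 / γ) * s x ^ 2 * A + (1 / γ - 1 / m) * s x ^ m * C) :
    HasDerivAt a (-B) ν := by
  have hγ0 : (0:ℝ) < γ := by linarith
  have hγB : γ * B ≠ 0 := by positivity
  set D : ℝ := ν * γ * (γ - 2) * B + (m - 2) * C with hDdef
  have hD0 : 0 < D := by
    have h1 : 0 < ν * γ * (γ - 2) * B := by
      have : (0:ℝ) < γ - 2 := by linarith
      positivity
    have h2 : 0 < (m - 2) * C := by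
      have : (0:ℝ) < m - 2 := by linarith
      positivity
    linarith
  set φ : ℝ → ℝ := fun t => (A * t ^ (2 - γ) - C * t ^ (m - γ)) / (γ * B) with hφdef
  -- key algebraic equivalence
  have key : ∀ t x : ℝ, 0 < t →
      (φ t = x ↔ x * γ * t ^ (γ - 2) * B + t ^ (m - 2) * C = A) := by
    intro t x ht
    have h1 : t ^ (2 - γ) * t ^ (γ - 2) = 1 := by
      rw [← Real.rpow_add ht]; norm_num
    have h2 : t ^ (m - γ) * t ^ (γ - 2) = t ^ (m - 2) := by
      rw [← Real.rpow_add ht]; ring_nf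
    have h3 : t ^ (m - 2) * t ^ (2 - γ) = t ^ (m - γ) := by
      rw [← Real.rpow_add ht]; ring_nf
    rw [hφdef]
    simp only [div_eq_iff hγB]
    constructor
    · intro E
      linear_combination (-(t ^ (γ - 2))) * E + A * h1 - C * h2
    · intro E
      linear_combination (-(t ^ (2 - γ))) * E + C * h3 + x * γ * B * h1
  have hφ1 : φ 1 = ν := by
    rw [hφdef]
    simp only [Real.one_rpow, mul_one]
    rw [div_eq_iff hγB]
    linarith [hcompat]
  -- strict derivative of φ at 1
  have hd1 : HasStrictDerivAt (fun t : ℝ => t ^ (2 - γ)) ((2 - γ) * 1 ^ (2 - γ - 1)) 1 :=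
    Real.hasStrictDerivAt_rpow_const (Or.inl one_ne_zero)
  have hd2 : HasStrictDerivAt (fun t : ℝ => t ^ (m - γ)) ((m - γ) * 1 ^ (m - γ - 1)) 1 :=
    Real.hasStrictDerivAt_rpow_const (Or.inl one_ne_zero)
  have hφ' : HasStrictDerivAt φ (-D / (γ * B)) 1 := by
    have := (((hd1.const_mul A).sub (hd2.const_mul C)).div_const (γ * B))
    convert this using 1
    · rfl
    · rfl
    · rfl
    rw [Real.one_rpow, Real.one_rpow]
    rw [hcompat, hDdef]
    field_simp
    ring
  have hne : -D / (γ * B) ≠ 0 := by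
    apply div_ne_zero _ hγB
    linarith
  set g : ℝ → ℝ := hφ'.localInverse φ _ 1 hne with hgdef
  have hginv : HasStrictDerivAt g (-D / (γ * B))⁻¹ ν := by
    rw [← hφ1]; exact hφ'.to_localInverse hne
  have hgν : g ν = 1 := by
    rw [← hφ1]
    exact (hφ'.hasStrictFDerivAt_equiv hne).localInverse_apply_image
  have hrinv : ∀ᶠ x in 𝓝 ν, φ (g x) = x := by
    rw [← hφ1]
    exact (hφ'.hasStrictFDerivAt_equiv hne).eventually_right_inverse
  have hgc : ContinuousAt g ν := by
    rw [← hφ1]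
    exact (hφ'.hasStrictFDerivAt_equiv hne).localInverse_continuousAt
  have hpos : ∀ᶠ x in 𝓝 ν, 0 < g x := by
    have h : ∀ᶠ y in 𝓝 (g ν), 0 < y := by
      rw [hgν]; exact eventually_gt_nhds one_pos
    exact hgc.eventually h
  have hmem : ∀ᶠ x in 𝓝 ν, x ∈ Set.Ioo (ν - δ) (ν + δ) :=
    Ioo_mem_nhds (by linarith) (by linarith)
  have heq : g =ᶠ[𝓝 ν] s := by
    filter_upwards [hmem, hpos, hrinv] with x h1 h2 h3
    exact (huniq x h1 (g x) h2 ((key (g x) x h2).mp h3))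
  have hs : HasDerivAt s (-D / (γ * B))⁻¹ ν :=
    hginv.hasDerivAt.congr_of_eventuallyEq heq.symm
  -- the outer function
  have hm0 : m ≠ 0 := by intro h; rw [h] at hm; linarith
  have p1 : HasDerivAt (fun t : ℝ => (1 / 2 - 1 / γ) * t ^ 2 * A) ((1 / 2 - 1 / γ) * 2 * A) 1 := by
    have := ((hasDerivAt_pow 2 (1:ℝ)).const_mul (1 / 2 - 1 / γ)).mul_const A
    convert this using 1
    · rfl
    · rfl
    norm_num
  have p2 : HasDerivAt (fun t : ℝ => (1 / γ - 1 / m) * t ^ m * C) ((1 / γ - 1 / m) * m * C) 1 := by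
    have := ((Real.hasDerivAt_rpow_const (p := m) (x := 1) (Or.inl one_ne_zero)).const_mul
      (1 / γ - 1 / m)).mul_const C
    convert this using 1
    · rfl
    · rfl
    rw [Real.one_rpow]
    ring
  have hh : HasDerivAt (fun t : ℝ => (1 / 2 - 1 / γ) * t ^ 2 * A + (1 / γ - 1 / m) * t ^ m * C)
      ((1 / 2 - 1 / γ) * 2 * A + (1 / γ - 1 / m) * m * C) (s ν) := by
    rw [hsν]; exact p1.add p2
  have hcomp := hh.comp ν hs
  have hfun : a = (fun t : ℝ => (1 / 2 - 1 / γ) * t ^ 2 * A + (1 / γ - 1 / m) * t ^ m * C) ∘ s :=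
    funext ha
  rw [hfun]
  convert hcomp using 1
  · rfl
  · rfl
  rw [hcompat]
  have hDne : D ≠ 0 := ne_of_gt hD0
  field_simp
  rw [hDdef]
  ring
end
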